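/- arXiv:2403.10503 — 2 statements merged into one kernel-verified Lean document; each statement's English description precedes it below -/
import Mathlib

section
/- The function j₁(δ) = ∑_{(k,l)∈ℤ²} |1 − πδ(k²+l²)| e^{−(π/2)δ(k²+l²)} is strictly decreasing on [1, ∞). -/
/-! With `g x = |1 - x| * exp (-(x / 2))`, the summand at a lattice point `p` is `g (π δ |p|²)`.
For `x ≥ 1` we have `g x = (x - 1) * exp (-(x / 2))`, whose derivative `exp (-(x / 2)) * (3 - x) / 2`
is negative for `x > 3`. Since `π δ |p|² ≥ π > 3` whenever `δ ≥ 1` and `p ≠ 0`, every summand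
except the constant one at the origin is strictly decreasing on `[1, ∞)`; the sums converge
because `g x ≤ 4 * exp (-(x / 4))` and Gaussian sums over `ℤ` converge. -/

open Real Set

lemma Real.summable_exp_neg_mul_int_sq {c : ℝ} (hc : 0 < c) :
    Summable fun k : ℤ => exp (-c * (k : ℝ) ^ 2) := by
  refine (HurwitzKernelBounds.summable_f_int 0 0 (div_pos hc pi_pos)).congr fun k => ?_
  simp only [HurwitzKernelBounds.f_int, add_zero, pow_zero, one_mul]
  congr 1
  field_simp

lemma abs_one_sub_mul_exp_neg_half_le {x : ℝ} (hx : 0 ≤ x) :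
    |1 - x| * exp (-(x / 2)) ≤ 4 * exp (-(x / 4)) := by
  have h_abs : |1 - x| ≤ 4 * exp (x / 4) := by
    rw [abs_le]
    constructor <;> nlinarith [add_one_le_exp (x / 4), exp_pos (x / 4)]
  calc |1 - x| * exp (-(x / 2)) ≤ 4 * exp (x / 4) * exp (-(x / 2)) := by gcongr
    _ = 4 * exp (-(x / 4)) := by rw [mul_assoc, ← exp_add]; ring_nf

lemma strictAntiOn_sub_one_mul_exp_neg_half :
    StrictAntiOn (fun x : ℝ => (x - 1) * exp (-(x / 2))) (Ici 3) := by
  refine strictAntiOn_of_deriv_neg (convex_Ici 3) (by fun_prop) fun x hx => ?_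
  rw [interior_Ici, mem_Ioi] at hx
  have hderiv : HasDerivAt (fun x : ℝ => (x - 1) * exp (-(x / 2)))
      (1 * exp (-(x / 2)) + (x - 1) * (exp (-(x / 2)) * -(1 / 2))) x :=
    ((hasDerivAt_id x).sub_const 1).mul ((hasDerivAt_id x).div_const 2).neg.exp
  rw [hderiv.deriv]
  nlinarith [exp_pos (-(x / 2))]

lemma strictAntiOn_abs_one_sub_mul_exp_neg_half :
    StrictAntiOn (fun x : ℝ => |1 - x| * exp (-(x / 2))) (Ici 3) := by
  refine strictAntiOn_sub_one_mul_exp_neg_half.congr fun x (hx : 3 ≤ x) => ?_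
  simp only [abs_of_nonpos (by linarith : 1 - x ≤ 0), neg_sub]

lemma strictAntiOn_abs_one_sub_pi_mul_mul_exp {n : ℝ} (hn : 1 ≤ n) :
    StrictAntiOn (fun δ : ℝ => |1 - π * δ * n| * exp (-(π / 2) * δ * n)) (Ici 1) := by
  have hmono : StrictMonoOn (fun δ : ℝ => π * δ * n) (Ici 1) := fun a _ b _ hab =>
    mul_lt_mul_of_pos_right (mul_lt_mul_of_pos_left hab pi_pos) (by linarith)
  have hmaps : MapsTo (fun δ : ℝ => π * δ * n) (Ici 1) (Ici 3) := fun δ (hδ : 1 ≤ δ) => by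
    have : π * 1 * 1 ≤ π * δ * n := by gcongr
    simp only [mem_Ici]
    linarith [pi_gt_three]
  convert strictAntiOn_abs_one_sub_mul_exp_neg_half.comp_strictMonoOn hmono hmaps using 3
  simp only [Function.comp_apply]
  ring_nf

lemma one_le_intCast_sq_add_sq {p : ℤ × ℤ} (hp : p ≠ 0) :
    (1 : ℝ) ≤ (p.1 : ℝ) ^ 2 + (p.2 : ℝ) ^ 2 := by
  have hpos : (0 : ℤ) < p.1 * p.1 + p.2 * p.2 := by
    refine (add_nonneg (mul_self_nonneg _) (mul_self_nonneg _)).lt_of_ne fun h => hp ?_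
    exact Prod.ext_iff.2 (mul_self_add_mul_self_eq_zero.1 h.symm)
  rw [← sq, ← sq] at hpos
  exact_mod_cast hpos

lemma summable_abs_one_sub_pi_mul_mul_exp {δ : ℝ} (hδ : 0 < δ) :
    Summable fun p : ℤ × ℤ =>
      |1 - π * δ * ((p.1 : ℝ) ^ 2 + (p.2 : ℝ) ^ 2)| *
        exp (-(π / 2) * δ * ((p.1 : ℝ) ^ 2 + (p.2 : ℝ) ^ 2)) := by
  have hc : 0 < π * δ / 4 := by positivity
  have hgauss := summable_exp_neg_mul_int_sq hc
  refine Summable.of_nonneg_of_le (fun p => by positivity) (fun p => ?_)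
    ((hgauss.mul_of_nonneg hgauss (fun _ => (exp_pos _).le) fun _ => (exp_pos _).le).mul_left 4)
  calc _ = |1 - π * δ * ((p.1 : ℝ) ^ 2 + (p.2 : ℝ) ^ 2)| *
        exp (-(π * δ * ((p.1 : ℝ) ^ 2 + (p.2 : ℝ) ^ 2) / 2)) := by ring_nf
    _ ≤ 4 * exp (-(π * δ * ((p.1 : ℝ) ^ 2 + (p.2 : ℝ) ^ 2) / 4)) :=
        abs_one_sub_mul_exp_neg_half_le (by positivity)
    _ = _ := by rw [← exp_add]; ring_nf

theorem stmt_14 :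
    StrictAntiOn
      (fun δ : ℝ => ∑' p : ℤ × ℤ,
        |1 - Real.pi * δ * ((p.1 : ℝ) ^ 2 + (p.2 : ℝ) ^ 2)| *
          Real.exp (-(Real.pi / 2) * δ * ((p.1 : ℝ) ^ 2 + (p.2 : ℝ) ^ 2)))
      (Set.Ici 1) := by
  intro a (ha : 1 ≤ a) b (hb : 1 ≤ b) hab
  have hlt {p : ℤ × ℤ} (hp : p ≠ 0) :=
    strictAntiOn_abs_one_sub_pi_mul_mul_exp (one_le_intCast_sq_add_sq hp) ha hb hab
  refine Summable.tsum_lt_tsum (i := (1, 0)) (fun p => ?_) (hlt (by simp))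
    (summable_abs_one_sub_pi_mul_mul_exp (by linarith))
    (summable_abs_one_sub_pi_mul_mul_exp (by linarith))
  rcases eq_or_ne p 0 with rfl | hp
  · simp
  · exact (hlt hp).le
end

section
/- For all n with 4 ≤ n ≤ 36, the tail sum ∑_{(k,l)∈ℤ², max(|k|,|l|) ≥ 6} |L_n(π(n+1)(k²+l²))| · e^{−(π/2)(n+1)(k²+l²)} is less than 10^{−28}. -/
/-! For `x ≥ 1` each term of the Laguerre sum is at most `C(n,k) x^n`, so `|L_n(x)| ≤ 2^n x^n`.
With `x = π(n+1)m` and `m = k² + l² ≥ 36`, the factor `(2π(n+1)m)^n` is absorbed by a small part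
of the Gaussian `e^{-π(n+1)m/2}`, leaving at most `e^{-72} e^{-k²} e^{-l²}`. Since
`e^{-k²} ≤ 2^{-|k|}`, the lattice sum of these is at most `e^{-72} · 3² < 10^{-28}`. -/

noncomputable def laguerre (n : ℕ) (x : ℝ) : ℝ :=
  ∑ k ∈ Finset.range (n + 1), (n.choose k : ℝ) * (-x) ^ k / (Nat.factorial k : ℝ)

open Real Finset

lemma abs_laguerre_le {n : ℕ} {x : ℝ} (hx : 1 ≤ x) : |laguerre n x| ≤ 2 ^ n * x ^ n := by
  have hx0 : 0 ≤ x := zero_le_one.trans hx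
  calc |laguerre n x|
      ≤ ∑ k ∈ range (n + 1), |(n.choose k : ℝ) * (-x) ^ k / (k.factorial : ℝ)| :=
        abs_sum_le_sum_abs _ _
    _ ≤ ∑ k ∈ range (n + 1), (n.choose k : ℝ) * x ^ n := by
        refine sum_le_sum fun k hk => ?_
        have hkn : k ≤ n := Nat.lt_succ_iff.1 (mem_range.1 hk)
        have hfac : (1 : ℝ) ≤ k.factorial := by exact_mod_cast k.factorial_pos
        rw [abs_div, abs_mul, abs_pow, abs_neg, abs_of_nonneg hx0, Nat.abs_cast, Nat.abs_cast]
        calc (n.choose k : ℝ) * x ^ k / k.factorial ≤ (n.choose k : ℝ) * x ^ k :=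
              div_le_self (by positivity) hfac
          _ ≤ (n.choose k : ℝ) * x ^ n := by gcongr
    _ = 2 ^ n * x ^ n := by
        rw [← sum_mul, ← Nat.cast_sum, Nat.sum_range_choose, Nat.cast_pow, Nat.cast_ofNat]

lemma pow_le_exp_nat_mul_sub_one {y : ℝ} (hy : 0 ≤ y) (n : ℕ) : y ^ n ≤ exp (n * (y - 1)) := by
  rw [exp_nat_mul]
  exact pow_le_pow_left₀ hy (by linarith [add_one_le_exp (y - 1)]) n

lemma seventy_two_mul_pi_le_exp_ten {n : ℕ} (hn : n ≤ 36) : 72 * π * (n + 1) ≤ exp 10 := by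
  have he : (2.7 : ℝ) ^ 10 ≤ exp 10 := by
    rw [show (10 : ℝ) = (10 : ℕ) * 1 by norm_num, exp_nat_mul]
    exact pow_le_pow_left₀ (by norm_num) (by linarith [exp_one_gt_d9]) 10
  have hn' : (n : ℝ) + 1 ≤ 37 := by exact_mod_cast Nat.succ_le_succ hn
  nlinarith [pi_lt_d2, pi_pos]

lemma abs_laguerre_mul_exp_le {n : ℕ} (hn : 2 ≤ n) (hn' : n ≤ 36) {m : ℝ} (hm : 36 ≤ m) :
    |laguerre n (π * (n + 1) * m)| * exp (-(π / 2) * (n + 1) * m) ≤ exp (-72 - m) := by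
  have hn2 : (2 : ℝ) ≤ n := by exact_mod_cast hn
  have hx : 1 ≤ π * (n + 1) * m :=
    one_le_mul_of_one_le_of_one_le (by nlinarith [pi_gt_three]) (by linarith)
  have hc : 0 ≤ π / 2 * (n + 1) - n / 36 - 1 := by nlinarith [pi_gt_three]
  calc |laguerre n (π * (n + 1) * m)| * exp (-(π / 2) * (n + 1) * m)
      ≤ 2 ^ n * (π * (n + 1) * m) ^ n * exp (-(π / 2) * (n + 1) * m) := by
        gcongr; exact abs_laguerre_le hx
    _ = (72 * π * (n + 1)) ^ n * (m / 36) ^ n * exp (-(π / 2) * (n + 1) * m) := by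
        rw [← mul_pow, ← mul_pow]; ring_nf
    _ ≤ exp 10 ^ n * exp (n * (m / 36 - 1)) * exp (-(π / 2) * (n + 1) * m) := by
        gcongr
        · exact seventy_two_mul_pi_le_exp_ten hn'
        · exact pow_le_exp_nat_mul_sub_one (by positivity) n
    _ = exp (10 * n + n * (m / 36 - 1) - π / 2 * (n + 1) * m) := by
        rw [← exp_nat_mul, ← exp_add, ← exp_add]; ring_nf
    _ ≤ exp (-72 - m) := exp_le_exp.2 (by
        nlinarith [mul_nonneg (sub_nonneg.2 hm) hc,
          mul_nonneg (sub_nonneg.2 pi_gt_three.le) n.cast_nonneg])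

lemma hasSum_pow_natAbs {r : ℝ} (hr0 : 0 ≤ r) (hr1 : r < 1) :
    HasSum (fun k : ℤ => r ^ k.natAbs) ((1 + r) / (1 - r)) := by
  have h := hasSum_geometric_of_lt_one hr0 hr1
  have hr : 1 - r ≠ 0 := by linarith
  rw [show (1 + r) / (1 - r) = (1 - r)⁻¹ + (1 - r)⁻¹ - r ^ (0 : ℤ).natAbs by field_simp; ring]
  exact HasSum.of_nat_of_neg (by simpa using h) (by simpa using h)

lemma hasSum_inv_two_pow_natAbs_mul :
    HasSum (fun p : ℤ × ℤ => (2 : ℝ)⁻¹ ^ p.1.natAbs * 2⁻¹ ^ p.2.natAbs) 9 := by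
  have h : HasSum (fun k : ℤ => (2 : ℝ)⁻¹ ^ k.natAbs) 3 := by
    convert hasSum_pow_natAbs (r := 2⁻¹) (by norm_num) (by norm_num) using 1; norm_num
  have h9 := h.mul h (h.summable.mul_of_nonneg h.summable (fun _ => by positivity)
    (fun _ => by positivity))
  rwa [show (3 : ℝ) * 3 = 9 by norm_num] at h9

lemma exp_neg_sq_le_inv_two_pow_natAbs (k : ℤ) : exp (-(k : ℝ) ^ 2) ≤ 2⁻¹ ^ k.natAbs := by
  have hk : (k.natAbs : ℝ) ≤ (k : ℝ) ^ 2 := by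
    rw [Nat.cast_natAbs]; exact_mod_cast Int.natAbs_le_self_sq k
  have he : exp (-1) ≤ 2⁻¹ := by
    rw [exp_neg]; exact inv_anti₀ two_pos (by linarith [add_one_le_exp 1])
  calc exp (-(k : ℝ) ^ 2) ≤ exp (k.natAbs * (-1)) := exp_le_exp.2 (by linarith)
    _ = exp (-1) ^ k.natAbs := exp_nat_mul _ _
    _ ≤ 2⁻¹ ^ k.natAbs := pow_le_pow_left₀ (exp_pos _).le he _

lemma sq_le_sq_add_sq_of_le_max_abs {R : Type*} [Ring R] [LinearOrder R] [IsStrictOrderedRing R]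
    {a b c : R} (hc : 0 ≤ c) (h : c ≤ max |a| |b|) : c ^ 2 ≤ a ^ 2 + b ^ 2 := by
  rcases le_max_iff.1 h with h | h
  · calc c ^ 2 ≤ |a| ^ 2 := pow_le_pow_left₀ hc h 2
      _ ≤ a ^ 2 + b ^ 2 := by rw [sq_abs]; exact le_add_of_nonneg_right (sq_nonneg b)
  · calc c ^ 2 ≤ |b| ^ 2 := pow_le_pow_left₀ hc h 2
      _ ≤ a ^ 2 + b ^ 2 := by rw [sq_abs]; exact le_add_of_nonneg_left (sq_nonneg a)

lemma tsum_subtype_le_tsum_of_le {ι : Type*} {P : ι → Prop} {f : {i // P i} → ℝ} {g : ι → ℝ}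
    (hf : ∀ i, 0 ≤ f i) (hfg : ∀ i, f i ≤ g i) (hg0 : ∀ i, 0 ≤ g i) (hg : Summable g) :
    ∑' i, f i ≤ ∑' i, g i :=
  have hgs : Summable fun i : {i // P i} => g i := hg.subtype {i | P i}
  (Summable.tsum_le_tsum hfg (hgs.of_nonneg_of_le hf hfg) hgs).trans
    (hg.tsum_subtype_le g {i | P i} hg0)

lemma nine_mul_exp_neg_seventy_two_lt : 9 * exp (-72) < 10 ^ (-(28 : ℤ)) := by
  have he : (2.7 : ℝ) ^ 72 ≤ exp 72 := by
    rw [show (72 : ℝ) = (72 : ℕ) * 1 by norm_num, exp_nat_mul]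
    exact pow_le_pow_left₀ (by norm_num) (by linarith [exp_one_gt_d9]) 72
  rw [exp_neg, ← div_eq_mul_inv, div_lt_iff₀ (exp_pos _)]
  calc (9 : ℝ) < 10 ^ (-(28 : ℤ)) * 2.7 ^ 72 := by norm_num
    _ ≤ 10 ^ (-(28 : ℤ)) * exp 72 := by gcongr

theorem stmt_17 (n : ℕ) (hn : 4 ≤ n) (hn' : n ≤ 36) :
    ∑' p : {p : ℤ × ℤ // 6 ≤ max |p.1| |p.2|},
        |laguerre n (Real.pi * (n + 1) *
            (((p.1 : ℤ × ℤ).1 : ℝ) ^ 2 + ((p.1 : ℤ × ℤ).2 : ℝ) ^ 2))| *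
          Real.exp (-(Real.pi / 2) * (n + 1) *
            (((p.1 : ℤ × ℤ).1 : ℝ) ^ 2 + ((p.1 : ℤ × ℤ).2 : ℝ) ^ 2)) <
      10 ^ (-(28 : ℤ)) := by
  set w : ℤ × ℤ → ℝ := fun p => exp (-72) * ((2 : ℝ)⁻¹ ^ p.1.natAbs * 2⁻¹ ^ p.2.natAbs)
  have hw : HasSum w (exp (-72) * 9) := hasSum_inv_two_pow_natAbs_mul.mul_left _
  calc _ ≤ ∑' p, w p :=
        tsum_subtype_le_tsum_of_le (fun _ => by positivity) ?_ (fun _ => by positivity) hw.summable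
    _ = 9 * exp (-72) := by rw [hw.tsum_eq, mul_comm]
    _ < 10 ^ (-(28 : ℤ)) := nine_mul_exp_neg_seventy_two_lt
  rintro ⟨⟨k, l⟩, hkl⟩
  have hm : (36 : ℝ) ≤ (k : ℝ) ^ 2 + (l : ℝ) ^ 2 := by
    exact_mod_cast sq_le_sq_add_sq_of_le_max_abs (by norm_num) hkl
  calc _ ≤ exp (-72 - ((k : ℝ) ^ 2 + (l : ℝ) ^ 2)) :=
        abs_laguerre_mul_exp_le (by omega) hn' hm
    _ = exp (-72) * (exp (-(k : ℝ) ^ 2) * exp (-(l : ℝ) ^ 2)) := by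
        rw [← exp_add, ← exp_add]; ring_nf
    _ ≤ exp (-72) * ((2 : ℝ)⁻¹ ^ k.natAbs * 2⁻¹ ^ l.natAbs) := by
        gcongr <;> exact exp_neg_sq_le_inv_two_pow_natAbs _
end
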